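/- Let K, D, λ, m be positive integers with λ dividing D, D dividing K + λ, and n := (K + λ)/D > 2; set p = D − λ. Consider the index coding problem with mK messages where, writing each k ∈ ZMod (mK) with representative whose residue modulo K has representative k̄ ∈ {1, …, K}: if k̄ ≤ K − 2D + λ then A'_k = {k + iK : 1 ≤ i ≤ m−1} ∪ {k + D + iK : 0 ≤ i ≤ m−1}, and if K − 2D + λ < k̄ ≤ K then A'_k = {k + iK : 1 ≤ i ≤ m−1} ∪ {k + jλ + iK : 1 ≤ j ≤ D/λ, 0 ≤ i ≤ m−1}. Then the set C^(m) = { e'_{i+(j−1)D} + e'_{i+jD} : 1 ≤ i ≤ D, 1 ≤ j ≤ n−2 } ∪ { e'_{K−2D+1+λ+i'} + e'_{K−D+1+i'} + e'_{K−λ+1+(i' mod λ)} : 0 ≤ i' ≤ p−1 }, where e'_l = Σ_{t=0}^{m−1} e_{l+tK} ∈ V_{mK}, is a valid scalar linear index code of length K − D for this problem, and moreover every valid scalar linear index code for this problem has length at least K − D. -/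

import Mathlib

/-!
Write `q = n - 2` and `p = D - λ`, so that `K = Dq + 2p + λ`. Since `e'_l` only depends on
`l mod K` and `e_k` differs from `e'_k` by the copies `e_{k+tK}`, which are side information,
receiver `k` only has to recover `e'_r` for the residue `r ∈ {1, …, K}` of `k`, knowing
`e'_{r+D}` if `r ≤ Dq` and `e'_{r+jλ}` (`1 ≤ j ≤ D/λ`) otherwise. The pairs
`e'_x + e'_{x+D}` carry a known `e'_a` with `a ≤ D` up to `e'_{a+Dq}`; after that, according to
the block `(Dq, Dq+p]`, `(Dq+p, Dq+2p]` or `(Dq+2p, K]` containing `r`, some triple has `e'_r`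
as its only unknown term (the side information wraps around modulo `K`).

Conversely, inside the first block the messages `1, …, K - D` only have side information about
larger ones, so any code projects onto a spanning set of `GF(2)^{K-D}`. As the code has at most
`K - D` elements, its length is exactly `K - D`.
-/

/-- Standard basis vector `e_j` of `V_n = ZMod n → GF(2)`. -/
def stdVec (n : ℕ) (j : ZMod n) : ZMod n → ZMod 2 := fun i => if i = j then 1 else 0

/-- `C` is a valid scalar linear index code over `GF(2)` for the index coding problem
with `n` messages and antidote pattern `A`. -/
def IsIndexCode (n : ℕ) (A : ZMod n → Set (ZMod n)) (C : Set (ZMod n → ZMod 2)) : Prop :=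
  C.Finite ∧ ∀ k : ZMod n,
    stdVec n k ∈ Submodule.span (ZMod 2) (C ∪ (stdVec n '' A k))

/-- `e'_l = Σ_{t=0}^{m-1} e_{l+tK} ∈ V_{mK}`. -/
def eSum (K m : ℕ) (l : ℕ) : ZMod (m * K) → ZMod 2 :=
  ∑ t ∈ Finset.range m, stdVec (m * K) ((l + t * K : ℕ))

/-- The representative in `{1, …, K}` of the residue modulo `K` of `k ∈ ZMod n`. -/
def resIdx (n K : ℕ) (k : ZMod n) : ℕ := if k.val % K = 0 then K else k.val % K

/-- Lifted antidote pattern of Class (iv): for `k` with residue index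
`k̄ ≤ K - 2D + λ` the antidotes are `{k+iK : 1 ≤ i ≤ m-1} ∪ {k+D+iK : 0 ≤ i ≤ m-1}`;
otherwise they are `{k+iK : 1 ≤ i ≤ m-1} ∪ {k+jλ+iK : 1 ≤ j ≤ D/λ, 0 ≤ i ≤ m-1}`. -/
def classivA (K D lam m : ℕ) (k : ZMod (m * K)) : Set (ZMod (m * K)) :=
  if resIdx (m * K) K k ≤ K - 2 * D + lam then
    {x | ∃ i : ℕ, 1 ≤ i ∧ i ≤ m - 1 ∧ x = k + (i * K : ℕ)} ∪
    {x | ∃ i : ℕ, i ≤ m - 1 ∧ x = k + (D + i * K : ℕ)}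
  else
    {x | ∃ i : ℕ, 1 ≤ i ∧ i ≤ m - 1 ∧ x = k + (i * K : ℕ)} ∪
    {x | ∃ j i : ℕ, 1 ≤ j ∧ j ≤ D / lam ∧ i ≤ m - 1 ∧ x = k + (j * lam + i * K : ℕ)}

/-- The lifted code of Class (iv) (Corollary 7), with `n = (K + λ)/D` and `p = D - λ`. -/
def codeClassiv (K D lam m : ℕ) : Set (ZMod (m * K) → ZMod 2) :=
  {v | ∃ i j : ℕ, 1 ≤ i ∧ i ≤ D ∧ 1 ≤ j ∧ j ≤ (K + lam) / D - 2 ∧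
    v = eSum K m (i + (j - 1) * D) + eSum K m (i + j * D)} ∪
  {v | ∃ i' : ℕ, i' < D - lam ∧
    v = eSum K m (K - 2 * D + 1 + lam + i') + eSum K m (K - D + 1 + i') +
      eSum K m (K - lam + 1 + (i' % lam))}

open Function

theorem funLeft_stdVec {n : ℕ} (S : Finset (ZMod n)) (j : ZMod n) [DecidableEq S] :
    LinearMap.funLeft (ZMod 2) (ZMod 2) ((↑) : S → ZMod n) (stdVec n j) =
      if hj : j ∈ S then Pi.single ⟨j, hj⟩ 1 else 0 := by
  ext i
  split_ifs with hj
  · simp [stdVec, Pi.single_apply, Subtype.ext_iff]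
  · have : (i : ZMod n) ≠ j := fun h => hj (h ▸ i.2)
    simp [stdVec, this]

/-- The maximum-acyclic-induced-subgraph bound: `f` topologically orders the side-information
graph on `S`. -/
theorem IsIndexCode.card_le_ncard_of_acyclic {n : ℕ} {A : ZMod n → Set (ZMod n)}
    {C : Set (ZMod n → ZMod 2)} (hC : IsIndexCode n A C) (S : Finset (ZMod n)) (f : ZMod n → ℕ)
    (hS : ∀ k ∈ S, ∀ j ∈ A k, j ∈ S → f k < f j) : S.card ≤ C.ncard := by
  classical
  set π := LinearMap.funLeft (ZMod 2) (ZMod 2) ((↑) : S → ZMod n)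
  set N := S.sup f
  have hsingle : ∀ c, ∀ k (hk : k ∈ S), N - f k ≤ c →
      Pi.single ⟨k, hk⟩ 1 ∈ Submodule.span (ZMod 2) (π '' C) := by
    intro c
    induction c using Nat.strong_induction_on with
    | _ c ih =>
    intro k hk hc
    have hdec := Submodule.apply_mem_span_image_of_mem_span π (hC.2 k)
    rw [funLeft_stdVec, dif_pos hk, Set.image_union] at hdec
    refine Submodule.span_le.mpr (Set.union_subset Submodule.subset_span ?_) hdec
    rintro _ ⟨_, ⟨j, hj, rfl⟩, rfl⟩
    rw [SetLike.mem_coe, funLeft_stdVec]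
    split_ifs with hjS
    · have hlt := hS k hk j hj hjS
      have hle : f j ≤ N := Finset.le_sup hjS
      exact ih (N - f j) (by omega) j hjS le_rfl
    · exact zero_mem _
  have htop : Submodule.span (ZMod 2) (π '' C) = ⊤ := by
    rw [eq_top_iff, ← (Pi.basisFun (ZMod 2) S).span_eq, Submodule.span_le]
    rintro _ ⟨⟨k, hk⟩, rfl⟩
    rw [Pi.basisFun_apply]
    exact hsingle _ k hk le_rfl
  have hfin := hC.1.image π
  have := hfin.fintype
  calc S.card = Module.finrank (ZMod 2) (S → ZMod 2) := by simp
    _ ≤ (π '' C).toFinset.card := by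
      rw [← finrank_top (ZMod 2), ← htop]; exact finrank_span_le_card _
    _ = (π '' C).ncard := (Set.ncard_eq_toFinset_card' _).symm
    _ ≤ C.ncard := Set.ncard_image_le hC.1

section LiftedVectors

theorem eSum_periodic (K m : ℕ) : Periodic (eSum K m) K := by
  intro l
  have hwrap : ((l + m * K : ℕ) : ZMod (m * K)) = (l : ℕ) := by simp
  have hshift := Finset.sum_range_succ' (fun t => stdVec (m * K) ((l + t * K : ℕ))) m
  rw [Finset.sum_range_succ, Nat.zero_mul, Nat.add_zero, hwrap, add_left_inj] at hshift
  simp only [eSum, add_assoc, ← Nat.succ_mul, Nat.succ_eq_add_one, add_comm K, hshift]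

variable {K m : ℕ}

theorem eSum_val_add [NeZero (m * K)] (k : ZMod (m * K)) (c : ℕ) :
    eSum K m (k.val + c) = ∑ t ∈ Finset.range m, stdVec (m * K) (k + (c + t * K : ℕ)) := by
  simp only [eSum, Nat.cast_add, ZMod.natCast_zmod_val, add_assoc]

theorem eSum_val_add_mem_span [NeZero (m * K)] {k : ZMod (m * K)} {c : ℕ}
    {C : Set (ZMod (m * K) → ZMod 2)} {A : Set (ZMod (m * K))}
    (hA : ∀ t < m, k + (c + t * K : ℕ) ∈ A) :
    eSum K m (k.val + c) ∈ Submodule.span (ZMod 2) (C ∪ stdVec (m * K) '' A) := by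
  rw [eSum_val_add]
  exact Submodule.sum_mem _ fun t ht =>
    Submodule.subset_span (Or.inr ⟨_, hA t (Finset.mem_range.mp ht), rfl⟩)

/-- `e_k = e'_k - Σ_{t ≥ 1} e_{k+tK}`. -/
theorem stdVec_mem_of_eSum_mem [NeZero (m * K)] (hm : 0 < m) {k : ZMod (m * K)}
    {R : Submodule (ZMod 2) (ZMod (m * K) → ZMod 2)} (hE : eSum K m k.val ∈ R)
    (hcopies : ∀ t, 1 ≤ t → t ≤ m - 1 → stdVec (m * K) (k + (t * K : ℕ)) ∈ R) :
    stdVec (m * K) k ∈ R := by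
  obtain ⟨m', rfl⟩ : ∃ m', m = m' + 1 := ⟨m - 1, by omega⟩
  rw [← add_zero k.val, eSum_val_add, Finset.sum_range_succ'] at hE
  simp only [zero_add, Nat.zero_mul, Nat.cast_zero, add_zero] at hE
  refine (add_mem_cancel_left (Submodule.sum_mem _ fun t ht => ?_)).mp hE
  exact hcopies (t + 1) (by omega) (by simp at ht; omega)

theorem resIdx_pos (hK : 0 < K) (k : ZMod (m * K)) : 0 < resIdx (m * K) K k := by
  unfold resIdx; split_ifs <;> omega

theorem resIdx_le (hK : 0 < K) (k : ZMod (m * K)) : resIdx (m * K) K k ≤ K := by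
  unfold resIdx; split_ifs
  · rfl
  · exact (Nat.mod_lt _ hK).le

theorem eSum_val_add_eq_resIdx_add (k : ZMod (m * K)) (c : ℕ) :
    eSum K m (k.val + c) = eSum K m (resIdx (m * K) K k + c) := by
  have hmod : (k.val + c) % K = (resIdx (m * K) K k + c) % K := by
    refine Nat.ModEq.add_right c ?_
    unfold resIdx; split_ifs with h
    · simp [Nat.ModEq, h]
    · exact (Nat.mod_mod _ _).symm
  rw [← (eSum_periodic K m).map_mod_nat, hmod, (eSum_periodic K m).map_mod_nat]

end LiftedVectors

section Decoding

variable {M σ : Type*} [AddCommGroup M] [SetLike σ M] [AddSubgroupClass σ M]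

/-- `R` contains the two codeword families of Class (iv), written through `E l = e'_l` and
`K - 2D + λ = Dq`. -/
structure ContainsClassivCode (R : σ) (E : ℕ → M) (D lam p q : ℕ) : Prop where
  pair_mem : ∀ x, 1 ≤ x → x ≤ D * q → E x + E (x + D) ∈ R
  triple_mem : ∀ i < p,
    E (D * q + 1 + i) + E (D * q + p + 1 + i) + E (D * q + 2 * p + 1 + i % lam) ∈ R

namespace ContainsClassivCode

variable {R : σ} {E : ℕ → M} {D lam p q : ℕ}

theorem add_mul_mem (hR : ContainsClassivCode R E D lam p q) {a : ℕ} (ha : 1 ≤ a)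
    (haD : a ≤ D) (h : E a ∈ R) : ∀ {j}, j ≤ q → E (a + D * j) ∈ R
  | 0, _ => by simpa using h
  | j + 1, hj => by
    have hx := hR.pair_mem (a + D * j) (by nlinarith) (by nlinarith)
    rw [mul_add_one, ← add_assoc]
    exact (add_mem_cancel_left (hR.add_mul_mem ha haD h (by omega))).mp hx

theorem third_mem_of_triple (hR : ContainsClassivCode R E D lam p q) {i : ℕ} (hi : i < p)
    (h₁ : E (D * q + 1 + i) ∈ R) (h₂ : E (D * q + p + 1 + i) ∈ R) :
    E (D * q + 2 * p + 1 + i % lam) ∈ R :=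
  (add_mem_cancel_left (add_mem h₁ h₂)).mp (hR.triple_mem i hi)

theorem first_mem_of_triple (hR : ContainsClassivCode R E D lam p q) {i : ℕ} (hi : i < p)
    (h₂ : E (D * q + p + 1 + i) ∈ R) (h₃ : E (D * q + 2 * p + 1 + i % lam) ∈ R) :
    E (D * q + 1 + i) ∈ R :=
  (add_mem_cancel_right h₂).mp ((add_mem_cancel_right h₃).mp (hR.triple_mem i hi))

theorem second_mem_of_triple (hR : ContainsClassivCode R E D lam p q) {i : ℕ} (hi : i < p)
    (h₁ : E (D * q + 1 + i) ∈ R) (h₃ : E (D * q + 2 * p + 1 + i % lam) ∈ R) :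
    E (D * q + p + 1 + i) ∈ R :=
  (add_mem_cancel_left h₁).mp ((add_mem_cancel_right h₃).mp (hR.triple_mem i hi))

theorem mem_first_block (hR : ContainsClassivCode R E D lam p q) {l i : ℕ} (hp : p = lam * l)
    (hi : i < p) (hanti : ∀ j, 1 ≤ j → j ≤ l + 1 → E (D * q + 1 + i + j * lam) ∈ R) :
    E (D * q + 1 + i) ∈ R := by
  obtain ⟨l, rfl⟩ : ∃ l', l = l' + 1 := ⟨l - 1, by rcases l with _ | _ <;> simp_all⟩
  replace hp : p = lam * l + lam := by rw [hp, mul_add_one]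
  have hsecond : E (D * q + p + 1 + i) ∈ R := by
    convert hanti (l + 1) (by omega) (by omega) using 2; rw [hp]; ring
  refine hR.first_mem_of_triple hi hsecond ?_
  by_cases hwrap : i + lam < p
  · -- the triple for `i + λ` shares its third term with the triple for `i`
    rw [← Nat.add_mod_right]
    refine hR.third_mem_of_triple hwrap ?_ ?_
    · convert hanti 1 le_rfl (by omega) using 2; ring
    · convert hanti (l + 2) (by omega) le_rfl using 2; rw [hp]; ring
  · have hmod : i % lam = i - lam * l := by
      conv_lhs => rw [show i = lam * l + (i - lam * l) by omega]
      rw [Nat.mul_add_mod, Nat.mod_eq_of_lt (by omega)]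
    convert hanti (l + 2) (by omega) le_rfl using 2
    rw [hmod, add_mul, mul_comm l]; omega

variable {K : ℕ}

theorem mem_second_block (hR : ContainsClassivCode R E D lam p q) (hE : Periodic E K)
    (hK : K = D * q + 2 * p + lam) (hD : D = p + lam) {l i : ℕ} (hp : p = lam * l)
    (hi : i < p) (hanti : ∀ j, 1 ≤ j → j ≤ l + 1 → E (D * q + p + 1 + i + j * lam) ∈ R) :
    E (D * q + p + 1 + i) ∈ R := by
  rw [mul_comm] at hp
  have hlam : 0 < lam := Nat.pos_of_ne_zero fun h => by simp [h] at hp; omega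
  have hfirst : E (D * q + 1 + i) ∈ R := by
    have hwrap := hanti (l + 1) (by omega) le_rfl
    rw [show D * q + p + 1 + i + (l + 1) * lam = 1 + i + K by rw [add_one_mul]; omega,
      hE] at hwrap
    convert hR.add_mul_mem (by omega) (by omega) hwrap le_rfl using 2; ring
  have hthird : E (D * q + 2 * p + 1 + i % lam) ∈ R := by
    have hdiv : i / lam < l := (Nat.div_lt_iff_lt_mul hlam).mpr (by omega)
    have hle : i / lam * lam ≤ l * lam := Nat.mul_le_mul_right _ hdiv.le
    have hi' := Nat.div_add_mod' i lam
    convert hanti (l - i / lam) (Nat.sub_pos_of_lt hdiv) ((Nat.sub_le _ _).trans l.le_succ)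
      using 2
    rw [Nat.sub_mul]; omega
  exact hR.second_mem_of_triple hi hfirst hthird

theorem mem_third_block (hR : ContainsClassivCode R E D lam p q) (hE : Periodic E K)
    (hK : K = D * q + 2 * p + lam) (hD : D = p + lam) {l u : ℕ} (hp : p = lam * l)
    (hu : u < lam) (hanti : ∀ j, 1 ≤ j → j ≤ l + 1 → E (D * q + 2 * p + 1 + u + j * lam) ∈ R) :
    E (D * q + 2 * p + 1 + u) ∈ R := by
  have hfirst : E (D * q + 1 + u) ∈ R := by
    have hwrap := hanti 1 le_rfl (by omega)
    rw [show D * q + 2 * p + 1 + u + 1 * lam = 1 + u + K by omega, hE] at hwrap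
    convert hR.add_mul_mem (by omega) (by omega) hwrap le_rfl using 2; ring
  rcases Nat.eq_zero_or_pos p with hp0 | hp0
  · simpa [hp0] using hfirst
  have hlp : lam ≤ p := hp ▸ Nat.le_mul_of_pos_right lam
    (Nat.pos_of_ne_zero fun hl => by simp [hl] at hp; omega)
  have hsecond : E (D * q + p + 1 + u) ∈ R := by
    have hwrap := hanti (l + 1) (by omega) le_rfl
    rw [show D * q + 2 * p + 1 + u + (l + 1) * lam = p + 1 + u + K by
      rw [add_one_mul, mul_comm l]; omega, hE] at hwrap
    convert hR.add_mul_mem (by omega) (by omega) hwrap le_rfl using 2; ring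
  simpa [Nat.mod_eq_of_lt hu] using hR.third_mem_of_triple (by omega) hfirst hsecond

theorem mem_of_antidotes (hR : ContainsClassivCode R E D lam p q) (hE : Periodic E K)
    (hK : K = D * q + 2 * p + lam) (hD : D = p + lam) {l r : ℕ} (hp : p = lam * l)
    (hr : 1 ≤ r) (hrK : r ≤ K) (hlow : r ≤ D * q → E (r + D) ∈ R)
    (hhigh : D * q < r → ∀ j, 1 ≤ j → j ≤ l + 1 → E (r + j * lam) ∈ R) : E r ∈ R := by
  by_cases h₀ : r ≤ D * q
  · exact (add_mem_cancel_right (hlow h₀)).mp (hR.pair_mem r hr h₀)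
  have hanti := hhigh (by omega)
  by_cases h₁ : r ≤ D * q + p
  · obtain ⟨i, rfl⟩ : ∃ i, r = D * q + 1 + i := ⟨r - (D * q + 1), by omega⟩
    exact hR.mem_first_block hp (by omega) hanti
  by_cases h₂ : r ≤ D * q + 2 * p
  · obtain ⟨i, rfl⟩ : ∃ i, r = D * q + p + 1 + i := ⟨r - (D * q + p + 1), by omega⟩
    exact hR.mem_second_block hE hK hD hp (by omega) hanti
  · obtain ⟨u, rfl⟩ : ∃ u, r = D * q + 2 * p + 1 + u := ⟨r - (D * q + 2 * p + 1), by omega⟩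
    exact hR.mem_third_block hE hK hD hp (by omega) hanti

end ContainsClassivCode

end Decoding

section Classiv

variable {K D lam m p q : ℕ}

theorem exists_offset_of_mem_classivA (hK : 0 < K) (hD : 0 < D) (hlam : 0 < lam)
    {k x : ZMod (m * K)} (hx : x ∈ classivA K D lam m k) :
    ∃ c : ℕ, 1 ≤ c ∧ c ≤ (m - 1) * K + D ∧ x = k + c := by
  unfold classivA at hx
  split_ifs at hx
  all_goals
    rcases hx with ⟨i, hi1, hi, rfl⟩ | hx
    · exact ⟨i * K, Nat.one_le_iff_ne_zero.mpr (by positivity),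
        (Nat.mul_le_mul_right K hi).trans (Nat.le_add_right _ _), rfl⟩
  · obtain ⟨i, hi, rfl⟩ := hx
    exact ⟨D + i * K, by omega, by nlinarith [Nat.mul_le_mul_right K hi], rfl⟩
  · obtain ⟨j, i, hj1, hj, hi, rfl⟩ := hx
    have hjD : j * lam ≤ D := (Nat.mul_le_mul_right lam hj).trans (Nat.div_mul_le_self D lam)
    exact ⟨j * lam + i * K, by nlinarith, by nlinarith [Nat.mul_le_mul_right K hi], rfl⟩

/-- The messages `1, …, K - D` of the first block induce an acyclic side-information graph. -/
theorem classivA_lower_bound (hK : 0 < K) (hD : 0 < D) (hlam : 0 < lam) (hm : 0 < m)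
    {C : Set (ZMod (m * K) → ZMod 2)} (hC : IsIndexCode (m * K) (classivA K D lam m) C) :
    K - D ≤ C.ncard := by
  have hKm : K ≤ m * K := Nat.le_mul_of_pos_left K hm
  have hmK : (m - 1) * K = m * K - K := Nat.sub_one_mul m K
  set S := (Finset.Icc 1 (K - D)).image (fun a : ℕ => (a : ZMod (m * K)))
  have hval : ∀ a ∈ Finset.Icc 1 (K - D), ((a : ℕ) : ZMod (m * K)).val = a := fun a ha =>
    ZMod.val_natCast_of_lt (by simp at ha; omega)
  have hcard : S.card = K - D := by
    rw [Finset.card_image_of_injOn fun a ha b hb hab => by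
      rw [← hval a ha, ← hval b hb, hab], Nat.card_Icc, Nat.add_sub_cancel]
  rw [← hcard]
  refine hC.card_le_ncard_of_acyclic S ZMod.val ?_
  simp only [S, Finset.mem_image]
  rintro _ ⟨a, ha, rfl⟩ x hx ⟨b, hb, rfl⟩
  obtain ⟨c, hc1, hc, hxc⟩ := exists_offset_of_mem_classivA hK hD hlam hx
  have hbx := hval b hb
  rw [hxc, ← Nat.cast_add, ZMod.val_natCast] at hbx
  rw [hval a ha, hxc, ← Nat.cast_add, ZMod.val_natCast]
  simp only [Finset.mem_Icc] at ha hb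
  rcases Nat.lt_or_ge (a + c) (m * K) with hlt | hge
  · rw [Nat.mod_eq_of_lt hlt] at hbx ⊢; omega
  · rw [show a + c = m * K by omega, Nat.mod_self] at hbx; omega

theorem classiv_div_sub_two (hK : K = D * q + 2 * p + lam) (hD : D = p + lam) (hDpos : 0 < D) :
    (K + lam) / D - 2 = q := by
  rw [show K + lam = D * (q + 2) by rw [hK, hD]; ring, Nat.mul_div_cancel_left _ hDpos]; rfl

theorem containsClassivCode_of_subset (hK : K = D * q + 2 * p + lam) (hD : D = p + lam)
    (hq : 1 ≤ q) (hDpos : 0 < D) {R : Submodule (ZMod 2) (ZMod (m * K) → ZMod 2)}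
    (hC : codeClassiv K D lam m ⊆ R) : ContainsClassivCode R (eSum K m) D lam p q where
  pair_mem x hx hxq := by
    have hdiv : (x - 1) / D < q := (Nat.div_lt_iff_lt_mul hDpos).mpr (by rw [mul_comm]; omega)
    have hx' := Nat.mod_add_div' (x - 1) D
    refine hC (Or.inl ⟨(x - 1) % D + 1, (x - 1) / D + 1, Nat.le_add_left 1 _,
      Nat.mod_lt _ hDpos, Nat.le_add_left 1 _, classiv_div_sub_two hK hD hDpos ▸ hdiv, ?_⟩)
    rw [Nat.add_sub_cancel, add_one_mul]
    congr 2 <;> omega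
  triple_mem i hi := by
    have hDq : D ≤ D * q := Nat.le_mul_of_pos_right D hq
    refine hC (Or.inr ⟨i, by omega, ?_⟩)
    congr 3 <;> omega

theorem codeClassiv_subset_finset (hK : K = D * q + 2 * p + lam) (hD : D = p + lam)
    (hDpos : 0 < D) :
    ∃ s : Finset (ZMod (m * K) → ZMod 2), codeClassiv K D lam m ⊆ s ∧ s.card ≤ K - D := by
  classical
  refine ⟨(Finset.Icc 1 (D * q)).image (fun x => eSum K m x + eSum K m (x + D)) ∪
    (Finset.range (D - lam)).image (fun i => eSum K m (K - 2 * D + 1 + lam + i) +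
      eSum K m (K - D + 1 + i) + eSum K m (K - lam + 1 + (i % lam))), ?_, ?_⟩
  · rintro _ (⟨i, j, hi1, hi, hj1, hj, rfl⟩ | ⟨i, hi, rfl⟩)
    · rw [classiv_div_sub_two hK hD hDpos] at hj
      have hjD : j * D ≤ q * D := Nat.mul_le_mul_right D hj
      obtain ⟨j, rfl⟩ : ∃ j', j = j' + 1 := ⟨j - 1, by omega⟩
      refine Finset.mem_union_left _ (Finset.mem_image.mpr ⟨i + j * D, ?_, ?_⟩)
      · simp only [Finset.mem_Icc]; constructor <;> nlinarith
      · simp only [Nat.add_sub_cancel, add_one_mul, add_assoc]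
    · exact Finset.mem_union_right _ (Finset.mem_image.mpr ⟨i, Finset.mem_range.mpr hi, rfl⟩)
  · calc _ ≤ (Finset.Icc 1 (D * q)).card + (Finset.range (D - lam)).card :=
          (Finset.card_union_le _ _).trans (add_le_add Finset.card_image_le Finset.card_image_le)
      _ = K - D := by simp; omega

theorem stdVec_mem_span_classivA (hK : K = D * q + 2 * p + lam) (hD : D = p + lam) {l : ℕ}
    (hp : p = lam * l) (hq : 1 ≤ q) (hlam : 0 < lam) (hm : 0 < m) (k : ZMod (m * K)) :
    stdVec (m * K) k ∈
      Submodule.span (ZMod 2) (codeClassiv K D lam m ∪ stdVec (m * K) '' classivA K D lam m k) := by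
  have hKpos : 0 < K := by omega
  have : NeZero (m * K) := ⟨by positivity⟩
  set R := Submodule.span (ZMod 2)
    (codeClassiv K D lam m ∪ stdVec (m * K) '' classivA K D lam m k)
  have hR := containsClassivCode_of_subset (R := R) hK hD hq (by omega)
    (Set.subset_union_left.trans Submodule.subset_span)
  have hanti : ∀ c, (∀ t < m, k + (c + t * K : ℕ) ∈ classivA K D lam m k) →
      eSum K m (resIdx (m * K) K k + c) ∈ R := fun c h =>
    eSum_val_add_eq_resIdx_add k c ▸ eSum_val_add_mem_span h
  have hthreshold : K - 2 * D + lam = D * q := by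
    have := Nat.le_mul_of_pos_right D hq; omega
  have hDdiv : D / lam = l + 1 := by
    rw [hD, hp, ← mul_add_one, Nat.mul_div_cancel_left _ hlam]
  refine stdVec_mem_of_eSum_mem hm ?_ fun t ht1 ht => ?_
  · rw [← add_zero k.val, eSum_val_add_eq_resIdx_add, add_zero]
    refine hR.mem_of_antidotes (eSum_periodic K m) hK hD hp (resIdx_pos hKpos k) (resIdx_le hKpos k)
      (fun hlow => hanti D fun t ht => ?_) (fun hhigh j hj1 hj => hanti (j * lam) fun t ht => ?_)
    · rw [classivA, if_pos (hthreshold ▸ hlow)]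
      exact Or.inr ⟨t, by omega, rfl⟩
    · rw [classivA, if_neg (hthreshold ▸ hhigh.not_ge)]
      exact Or.inr ⟨j, t, hj1, hDdiv ▸ hj, by omega, rfl⟩
  · refine Submodule.subset_span (Or.inr ⟨_, ?_, rfl⟩)
    unfold classivA
    split_ifs <;> exact Or.inl ⟨t, ht1, ht, rfl⟩

theorem classiv_parameters (hD : 0 < D) (hdvd1 : lam ∣ D)
    (hdvd2 : D ∣ (K + lam)) (hn : 2 < (K + lam) / D) :
    ∃ q p l, 1 ≤ q ∧ K = D * q + 2 * p + lam ∧ D = p + lam ∧ p = lam * l := by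
  obtain ⟨L, rfl⟩ := hdvd1
  obtain ⟨n, hn'⟩ := hdvd2
  rw [hn', Nat.mul_div_cancel_left _ hD] at hn
  obtain ⟨l, rfl⟩ : ∃ l, L = l + 1 := ⟨L - 1, by rcases L with _ | _ <;> simp_all⟩
  refine ⟨n - 2, lam * l, l, by omega, ?_, by ring, rfl⟩
  obtain ⟨q, rfl⟩ : ∃ q, n = q + 2 := ⟨n - 2, by omega⟩
  simp only [Nat.add_sub_cancel]
  nlinarith

end Classiv

/-- **Class (iv) lifted (Corollary 7).** For `λ ∣ D`, `D ∣ K + λ` and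
`n = (K + λ)/D > 2`, the lifted code is a valid scalar linear index code of optimal
length `K - D` for the lifted Class (iv) problem on `m*K` messages. -/
theorem lifted_code_class_iv (K D lam m : ℕ) (hK : 0 < K) (hD : 0 < D) (hlam : 0 < lam)
    (hm : 0 < m) (hdvd1 : lam ∣ D) (hdvd2 : D ∣ (K + lam)) (hn : 2 < (K + lam) / D) :
    (IsIndexCode (m * K) (classivA K D lam m) (codeClassiv K D lam m) ∧
      (codeClassiv K D lam m).ncard = K - D) ∧
    (∀ C' : Set (ZMod (m * K) → ZMod 2),
      IsIndexCode (m * K) (classivA K D lam m) C' → K - D ≤ C'.ncard) := by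
  obtain ⟨q, p, l, hq, hKe, hDe, hp⟩ := classiv_parameters hD hdvd1 hdvd2 hn
  obtain ⟨s, hsub, hcard⟩ := codeClassiv_subset_finset (m := m) hKe hDe hD
  have hcode : IsIndexCode (m * K) (classivA K D lam m) (codeClassiv K D lam m) :=
    ⟨s.finite_toSet.subset hsub, stdVec_mem_span_classivA hKe hDe hp hq hlam hm⟩
  have hlower : ∀ C', IsIndexCode (m * K) (classivA K D lam m) C' → K - D ≤ C'.ncard :=
    fun _ hC' => classivA_lower_bound hK hD hlam hm hC'
  refine ⟨⟨hcode, le_antisymm ?_ (hlower _ hcode)⟩, hlower⟩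
  calc (codeClassiv K D lam m).ncard ≤ (s : Set _).ncard := Set.ncard_le_ncard hsub
    _ = s.card := Set.ncard_coe_finset s
    _ ≤ K - D := hcard
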